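/- arXiv:2510.09612 — 2 statements merged into one kernel-verified Lean document; each statement's English description precedes it below -/
import Mathlib

section
/- The inner product of sinc with its dilated-translated copies: for all n ∈ ℤ, ∫_ℝ sinc(x)·sinc(2x−n) dx = (1/2)·sinc(n/2), where sinc(t) = sin(πt)/(πt). -/
/-!
Let `w` be the convolution of the box `𝟙_[-1/2, 1/2]` with the modulated box
`s ↦ e^{iπns} 𝟙_[-1, 1](s)`. The Fourier transforms of the two boxes are `sinc ξ` and
`2 sinc (2ξ - n)`, so `𝓕 w ξ = 2 sinc ξ sinc (2ξ - n)`, which is integrable as a product of two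
`L²` functions. Near `0` the wider box is constant on the support of the narrow one, so there
`w t = sinc (n/2) e^{iπnt}`; in particular `w` is continuous at `0` and Fourier inversion at `0`
gives `∫ 2 sinc ξ sinc (2ξ - n) dξ = w 0 = sinc (n/2)`.
-/

open MeasureTheory Real Complex

noncomputable def sinc (t : ℝ) : ℝ :=
  if t = 0 then 1 else Real.sin (Real.pi * t) / (Real.pi * t)

noncomputable def saftKernel (A B D p q : ℝ) (x ζ : ℝ) : ℂ :=
  ((2 * Real.pi * Complex.I * (B : ℂ)) ^ (-(1/2) : ℂ)) *
    Complex.exp ((Complex.I / (2 * (B : ℂ))) *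
      ((A : ℂ) * (x : ℂ)^2 + 2 * (x : ℂ) * ((p : ℂ) - (ζ : ℂ))
        - 2 * (ζ : ℂ) * ((D : ℂ) * (p : ℂ) - (B : ℂ) * (q : ℂ))
        + (D : ℂ) * ((ζ : ℂ)^2 + (p : ℂ)^2)))

noncomputable def saft (A B D p q : ℝ) (f : ℝ → ℂ) (ζ : ℝ) : ℂ :=
  ∫ x : ℝ, f x * saftKernel A B D p q x ζ

noncomputable def ftransform (f : ℝ → ℂ) (ω : ℝ) : ℂ :=
  (Real.sqrt (2 * Real.pi) : ℂ)⁻¹ * ∫ x : ℝ, f x * Complex.exp (-(Complex.I * (x : ℂ) * (ω : ℂ)))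

open scoped FourierTransform Convolution
open Set ContinuousLinearMap

theorem sinc_eq_sinc_pi_mul (t : ℝ) : _root_.sinc t = Real.sinc (π * t) := by
  by_cases ht : t = 0
  · simp [_root_.sinc, ht]
  · simp [_root_.sinc, Real.sinc, ht, pi_ne_zero]

theorem Real.sinc_sq_le (x : ℝ) : Real.sinc x ^ 2 ≤ 2 * (1 + x ^ 2)⁻¹ := by
  rw [← div_eq_mul_inv, le_div_iff₀ (by positivity)]
  rcases le_or_gt (x ^ 2) 1 with hx | hx
  · nlinarith [Real.abs_sinc_le_one x, sq_abs (Real.sinc x), abs_nonneg (Real.sinc x)]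
  · have hx0 : x ≠ 0 := by rintro rfl; norm_num at hx
    rw [Real.sinc_of_ne_zero hx0, div_pow, div_mul_eq_mul_div, div_le_iff₀ (by positivity)]
    nlinarith [Real.sin_sq_le_one x]

theorem Real.memLp_two_sinc : MemLp Real.sinc 2 := by
  refine (memLp_two_iff_integrable_sq Real.continuous_sinc.aestronglyMeasurable).2 ?_
  refine (integrable_inv_one_add_sq.const_mul 2).mono' (by fun_prop) (ae_of_all _ fun x => ?_)
  rw [Real.norm_eq_abs, abs_of_nonneg (sq_nonneg _)]
  exact Real.sinc_sq_le x

theorem memLp_two_sinc_mul_sub (a b : ℝ) (ha : a ≠ 0) :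
    MemLp (fun x => _root_.sinc (a * x - b)) 2 := by
  have h : Integrable fun x => Real.sinc (π * a * x - π * b) ^ 2 :=
    ((memLp_two_iff_integrable_sq Real.continuous_sinc.aestronglyMeasurable).1
      Real.memLp_two_sinc).comp_sub_right (π * b) |>.comp_mul_left' (mul_ne_zero pi_ne_zero ha)
  have hcont : Continuous fun x => _root_.sinc (a * x - b) := by
    simp_rw [sinc_eq_sinc_pi_mul]; fun_prop
  refine (memLp_two_iff_integrable_sq hcont.aestronglyMeasurable).2 ?_
  refine h.congr (ae_of_all _ fun x => ?_)
  simp only [sinc_eq_sinc_pi_mul, mul_sub, mul_assoc]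

theorem integrable_sinc_mul_sinc_two_mul_sub (c : ℝ) :
    Integrable fun x => _root_.sinc x * _root_.sinc (2 * x - c) := by
  have h := (memLp_two_sinc_mul_sub 1 0 one_ne_zero).integrable_mul
    (memLp_two_sinc_mul_sub 2 c two_ne_zero)
  simp only [one_mul, sub_zero] at h
  exact h

theorem integral_cexp_neg_two_pi_mul_I (r a : ℝ) :
    ∫ s in -r..r, cexp (-2 * π * a * s * I) = 2 * r * (_root_.sinc (2 * r * a) : ℂ) := by
  rcases eq_or_ne (2 * r * a) 0 with hra | hra
  · rcases mul_eq_zero.1 hra with hr | rfl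
    · obtain rfl : r = 0 := by linarith
      simp
    · simp [_root_.sinc]; ring
  have hc : (-2 * π * a * I : ℂ) ≠ 0 := by
    simp [pi_ne_zero, right_ne_zero_of_mul hra]
  have hpi : (π : ℂ) ≠ 0 := ofReal_ne_zero.2 pi_ne_zero
  have hr : (r : ℂ) ≠ 0 := ofReal_ne_zero.2 (right_ne_zero_of_mul (left_ne_zero_of_mul hra))
  have ha : (a : ℂ) ≠ 0 := ofReal_ne_zero.2 (right_ne_zero_of_mul hra)
  simp_rw [show ∀ s : ℂ, -2 * π * a * s * I = -2 * π * a * I * s from fun s => by ring]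
  rw [integral_exp_mul_complex hc, _root_.sinc, if_neg hra]
  push_cast
  rw [show -2 * π * a * I * r = (-(2 * π * a * r) : ℂ) * I by ring,
    show -2 * π * a * I * -r = (2 * π * a * r : ℂ) * I by ring,
    exp_mul_I, exp_mul_I, Complex.cos_neg, Complex.sin_neg]
  field_simp
  ring

noncomputable def modulatedBox (r a : ℝ) : ℝ → ℂ :=
  (Icc (-r) r).indicator fun s => cexp (2 * π * a * s * I)

theorem integrable_modulatedBox (r a : ℝ) : Integrable (modulatedBox r a) :=
  (integrable_indicator_iff measurableSet_Icc).2 (Continuous.integrableOn_Icc (by fun_prop))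

theorem integral_indicator_Icc_eq_intervalIntegral {E : Type*} [NormedAddCommGroup E]
    [NormedSpace ℝ E] {a b : ℝ} (hab : a ≤ b) (f : ℝ → E) :
    ∫ s, (Icc a b).indicator f s = ∫ s in a..b, f s := by
  rw [integral_indicator measurableSet_Icc, integral_Icc_eq_integral_Ioc,
    intervalIntegral.integral_of_le hab]

theorem fourier_modulatedBox {r : ℝ} (hr : 0 ≤ r) (a ξ : ℝ) :
    𝓕 (modulatedBox r a) ξ = 2 * r * (_root_.sinc (2 * r * (ξ - a)) : ℂ) := by
  rw [Real.fourier_real_eq_integral_exp_smul, ← integral_cexp_neg_two_pi_mul_I,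
    ← integral_indicator_Icc_eq_intervalIntegral (by linarith)]
  congr with s
  rw [modulatedBox, ← indicator_smul_apply _ fun v : ℝ => cexp (↑(-2 * π * v * ξ) * I)]
  congr with s
  rw [smul_eq_mul]
  rw [← Complex.exp_add]
  push_cast
  ring_nf

theorem convolution_modulatedBox_apply {r R : ℝ} (hr : 0 ≤ r) (a : ℝ) {t : ℝ} (ht : |t| ≤ R - r) :
    (modulatedBox r 0 ⋆[mul ℂ ℂ] modulatedBox R a) t
      = 2 * r * _root_.sinc (2 * r * a) * cexp (2 * π * a * t * I) := by
  rw [convolution_def, ← integral_cexp_neg_two_pi_mul_I, ← intervalIntegral.integral_mul_const,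
    ← integral_indicator_Icc_eq_intervalIntegral (by linarith)]
  congr with s
  by_cases hs : s ∈ Icc (-r) r
  · have hts : t - s ∈ Icc (-R) R := by
      constructor <;> linarith [abs_le.1 ht, hs.1, hs.2]
    simp only [modulatedBox, indicator_of_mem hs, indicator_of_mem hts, mul_apply', ← Complex.exp_add]
    push_cast
    ring_nf
  · simp [modulatedBox, indicator_of_notMem hs]

theorem continuousAt_convolution_modulatedBox {r R : ℝ} (hr : 0 ≤ r) (hrR : r < R) (a : ℝ) :
    ContinuousAt (modulatedBox r 0 ⋆[mul ℂ ℂ] modulatedBox R a) 0 := by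
  have h : (fun t : ℝ => 2 * r * _root_.sinc (2 * r * a) * cexp (2 * π * a * t * I))
      =ᶠ[nhds 0] modulatedBox r 0 ⋆[mul ℂ ℂ] modulatedBox R a := by
    filter_upwards [Metric.closedBall_mem_nhds (0 : ℝ) (sub_pos.2 hrR)] with t ht
    rw [convolution_modulatedBox_apply hr a (by simpa using ht)]
  exact (Continuous.continuousAt (by fun_prop)).congr h

/-- `∫ sinc(x) sinc(2x−n) dx = (1/2) sinc(n/2)` for every integer `n`. -/
theorem sinc_dilated_translate_inner_product (n : ℤ) :
    ∫ x : ℝ, _root_.sinc x * _root_.sinc (2 * x - n) = (1 / 2) * _root_.sinc ((n : ℝ) / 2) := by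
  set w := modulatedBox (1 / 2) 0 ⋆[mul ℂ ℂ] modulatedBox 1 (n / 2) with hw
  have hfourier : 𝓕 w = fun x => ((2 * (_root_.sinc x * _root_.sinc (2 * x - n)) : ℝ) : ℂ) := by
    ext x
    rw [Real.fourier_mul_convolution_eq (integrable_modulatedBox _ _) (integrable_modulatedBox _ _),
      fourier_modulatedBox (by norm_num), fourier_modulatedBox zero_le_one]
    push_cast
    ring_nf
  have hinv : 𝓕⁻ (𝓕 w) 0 = w 0 :=
    ((integrable_modulatedBox _ _).integrable_convolution _ (integrable_modulatedBox _ _)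
      ).fourierInv_fourier_eq
      (hfourier ▸ ((integrable_sinc_mul_sinc_two_mul_sub n).const_mul 2).ofReal)
      (continuousAt_convolution_modulatedBox (by norm_num) (by norm_num) _)
  have hw0 : w 0 = _root_.sinc (n / 2) := by
    rw [hw, convolution_modulatedBox_apply (by norm_num) _ (by norm_num)]
    norm_num
  rw [hw0, Real.fourierInv_eq, hfourier] at hinv
  simp only [inner_zero_right, AddChar.map_zero_eq_one, one_smul] at hinv
  rw [integral_complex_ofReal, ofReal_inj, integral_const_mul] at hinv
  linarith
end

section
/- Scale-invariance characterization of the SAFT multiresolution spaces: with V_S^k = {f ∈ L²(ℝ) : O_S[f](ζ) = 0 a.e. |ζ| ≥ 2^k Bπ}, a function f belongs to V_S^0 if and only if the function x ↦ exp{(i/2B)(3Ax² + 2xp)}·f(2x) belongs to V_S^1. -/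
open MeasureTheory Real Complex

/-!
The two SAFT kernels `K(x, ζ)` and `K(a x, ζ / a)` differ by a chirp in `x` times a unimodular
phase in `ζ`. Hence the SAFT of `x ↦ chirp(x) · f(a x)` at `ζ` is `|a|⁻¹ · phase(ζ) · O_S[f](ζ / a)`,
and for `a = 2` it vanishes exactly where `O_S[f](ζ / 2)` does. Halving maps `{|ζ| ≥ 2Bπ}` onto
`{|ζ| ≥ Bπ}` and preserves Lebesgue-null sets in both directions, which gives the equivalence.
-/

theorem MeasureTheory.Measure.ae_comp_smul_iff {E : Type*} [NormedAddCommGroup E] [NormedSpace ℝ E]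
    [MeasurableSpace E] [BorelSpace E] [FiniteDimensional ℝ E] (μ : Measure E)
    [μ.IsAddHaarMeasure] {r : ℝ} (hr : r ≠ 0) {P : E → Prop} :
    (∀ᵐ x ∂μ, P (r • x)) ↔ ∀ᵐ x ∂μ, P x := by
  refine ⟨fun h ↦ ?_, fun h ↦ (Measure.quasiMeasurePreserving_smul μ hr).ae h⟩
  simpa only [smul_inv_smul₀ hr] using (Measure.quasiMeasurePreserving_smul μ (inv_ne_zero hr)).ae h

section ChirpDilation

variable (A B D p q : ℝ)

noncomputable def saftChirp (a x : ℝ) : ℂ :=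
  Complex.exp ((Complex.I / (2 * (B : ℂ))) *
    (((a : ℂ) ^ 2 - 1) * (A : ℂ) * (x : ℂ) ^ 2 + 2 * ((a : ℂ) - 1) * (x : ℂ) * (p : ℂ)))

noncomputable def saftDilationPhase (a ζ : ℝ) : ℂ :=
  Complex.exp ((Complex.I / (2 * (B : ℂ))) *
    (-2 * (1 - (a : ℂ)⁻¹) * (ζ : ℂ) * ((D : ℂ) * (p : ℂ) - (B : ℂ) * (q : ℂ))
      + (1 - (a : ℂ)⁻¹ ^ 2) * (D : ℂ) * (ζ : ℂ) ^ 2))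

variable {A B D p q}

theorem saftChirp_mul_saftKernel (hB : B ≠ 0) {a : ℝ} (ha : a ≠ 0) (x ζ : ℝ) :
    saftChirp A B p a x * saftKernel A B D p q x ζ
      = saftDilationPhase B D p q a ζ * saftKernel A B D p q (a * x) (ζ / a) := by
  have hB' : (B : ℂ) ≠ 0 := by exact_mod_cast hB
  have ha' : (a : ℂ) ≠ 0 := by exact_mod_cast ha
  unfold saftChirp saftDilationPhase saftKernel
  push_cast
  rw [mul_left_comm (cexp _) (_ ^ _), mul_left_comm (cexp _) (_ ^ _), ← Complex.exp_add,
    ← Complex.exp_add]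
  congr 2
  field_simp
  ring

theorem saft_chirp_dilation (hB : B ≠ 0) {a : ℝ} (ha : a ≠ 0) (f : ℝ → ℂ) (ζ : ℝ) :
    saft A B D p q (fun x ↦ saftChirp A B p a x * f (a * x)) ζ
      = (|a|⁻¹ : ℝ) * saftDilationPhase B D p q a ζ * saft A B D p q f (ζ / a) := by
  have hintegrand : ∀ x, saftChirp A B p a x * f (a * x) * saftKernel A B D p q x ζ
      = saftDilationPhase B D p q a ζ * (f (a * x) * saftKernel A B D p q (a * x) (ζ / a)) := by
    intro x
    rw [mul_right_comm, saftChirp_mul_saftKernel hB ha]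
    ring
  unfold saft
  simp_rw [hintegrand, integral_const_mul,
    Measure.integral_comp_mul_left (fun y ↦ f y * saftKernel A B D p q y (ζ / a)), abs_inv,
    Complex.real_smul]
  ring

theorem saft_chirp_dilation_eq_zero_iff (hB : B ≠ 0) {a : ℝ} (ha : a ≠ 0) (f : ℝ → ℂ) (ζ : ℝ) :
    saft A B D p q (fun x ↦ saftChirp A B p a x * f (a * x)) ζ = 0
      ↔ saft A B D p q f (ζ / a) = 0 := by
  have hscale : ((|a|⁻¹ : ℝ) : ℂ) ≠ 0 := by exact_mod_cast inv_ne_zero (abs_ne_zero.mpr ha)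
  have hphase : saftDilationPhase B D p q a ζ ≠ 0 := Complex.exp_ne_zero _
  rw [saft_chirp_dilation hB ha, mul_eq_zero, or_iff_right (mul_ne_zero hscale hphase)]

end ChirpDilation

theorem saft_mra_scale_invariance_general
    (A B D p q : ℝ) (hB : 0 < B)
    (f : ℝ → ℂ) :
    (∀ᵐ ζ : ℝ, B * Real.pi ≤ |ζ| → saft A B D p q f ζ = 0) ↔
      (∀ᵐ ζ : ℝ, 2 * B * Real.pi ≤ |ζ| →
        saft A B D p q
          (fun x : ℝ => Complex.exp ((Complex.I / (2 * (B : ℂ))) *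
              (3 * (A : ℂ) * (x : ℂ)^2 + 2 * (x : ℂ) * (p : ℂ))) * f (2 * x)) ζ = 0) := by
  have hchirp : (fun x : ℝ => Complex.exp ((Complex.I / (2 * (B : ℂ))) *
      (3 * (A : ℂ) * (x : ℂ)^2 + 2 * (x : ℂ) * (p : ℂ))) * f (2 * x))
        = fun x ↦ saftChirp A B p 2 x * f (2 * x) := by
    funext x
    unfold saftChirp
    norm_num
  rw [hchirp, ← Measure.ae_comp_smul_iff volume (inv_ne_zero (two_ne_zero' ℝ))]
  refine Filter.eventually_congr (Filter.Eventually.of_forall fun ζ ↦ ?_)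
  have hband : B * π ≤ |(2 : ℝ)⁻¹ • ζ| ↔ 2 * B * π ≤ |ζ| := by
    rw [smul_eq_mul, abs_mul, abs_of_pos (by norm_num : (0 : ℝ) < 2⁻¹)]
    constructor <;> intro h <;> linarith
  rw [hband, saft_chirp_dilation_eq_zero_iff hB.ne' two_ne_zero, smul_eq_mul, div_eq_inv_mul]

/-- `f ∈ V_S^0` iff `x ↦ e^{(i/2B)(3Ax²+2xp)} f(2x) ∈ V_S^1`. -/
theorem saft_mra_scale_invariance
    (A B C D p q : ℝ) (hdet : A * D - B * C = 1) (hB : 0 < B)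
    (f : ℝ → ℂ) (hf : MemLp f 2 (volume : Measure ℝ)) :
    (∀ᵐ ζ : ℝ, B * Real.pi ≤ |ζ| → saft A B D p q f ζ = 0) ↔
      (∀ᵐ ζ : ℝ, 2 * B * Real.pi ≤ |ζ| →
        saft A B D p q
          (fun x : ℝ => Complex.exp ((Complex.I / (2 * (B : ℂ))) *
              (3 * (A : ℂ) * (x : ℂ)^2 + 2 * (x : ℂ) * (p : ℂ))) * f (2 * x)) ζ = 0) :=
  saft_mra_scale_invariance_general A B D p q hB f
end
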